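/- Let X ∈ ℝ^{m×n} with every row standard deviation σ_i(X) positive and set σ_min = min_i σ_i(X). Then for all directions U, V ∈ ℝ^{m×n}, the second Fréchet derivative of LayerNorm at X satisfies ‖D²LayerNorm(X)[U, V]‖_F ≤ [ (‖X‖₂/σ_min³)·(1 + sqrt(m/n)) + ‖X‖₂²/(√n·σ_min³) + 3·‖X‖₂³/(n·σ_min⁵) ]·‖U‖_F·‖V‖_F. -/

import Mathlib

/-!
Row by row, `layerNorm Y` is `σᵢ(Y)⁻¹ • M(Y)ᵢ` with `σᵢ(Y)² = ⟪M(Y)ᵢ, M(Y)ᵢ⟫ / n`, so two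
applications of the product rule give the Hessian explicitly: four row rescalings
`diag(rᵢ) · M(W)` with `W ∈ {X, U, V}`, whose coefficients `rᵢ` are powers of
`σᵢ⁻¹ ≤ σ_min⁻¹` times row covariances `⟪M(A)ᵢ, M(B)ᵢ⟫ / n`. By Cauchy–Schwarz such a covariance
is at most `‖Aᵢ‖ ‖Bᵢ‖ / n`, centering does not increase row norms, and a row of `X` has norm at
most `‖X‖₂`. This bounds the Hessian by `(3‖X‖₂/(n σ_min³) + 3‖X‖₂³/(n² σ_min⁵)) ‖U‖_F ‖V‖_F`,
which is below the stated bound because `σᵢ > 0` forces `n ≥ 2`.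
-/

noncomputable section

open Matrix

attribute [local instance] Matrix.frobeniusNormedAddCommGroup Matrix.frobeniusNormedSpace

/-- Frobenius norm of a real matrix. -/
def frob {m n : ℕ} (A : Matrix (Fin m) (Fin n) ℝ) : ℝ :=
  Real.sqrt (∑ i, ∑ j, A i j ^ 2)

/-- Spectral norm (largest singular value) of a real matrix: the operator norm of the
associated linear map between Euclidean spaces. -/
def spec {m n : ℕ} (A : Matrix (Fin m) (Fin n) ℝ) : ℝ :=
  ‖LinearMap.toContinuousLinearMap (Matrix.toEuclideanLin A)‖

/-- Centering matrix `C = Iₙ - (1/n)·𝟙𝟙ᵀ`. -/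
def centerC (n : ℕ) : Matrix (Fin n) (Fin n) ℝ :=
  1 - (n : ℝ)⁻¹ • Matrix.of (fun _ _ => (1 : ℝ))

/-- Row-centered matrix `M(X) = X·C`. -/
def centered {m n : ℕ} (X : Matrix (Fin m) (Fin n) ℝ) : Matrix (Fin m) (Fin n) ℝ :=
  X * centerC n

/-- Row standard deviations `σᵢ(X) = sqrt((1/n)·Σⱼ M(X)ᵢⱼ²)`. -/
def rowSigma {m n : ℕ} (X : Matrix (Fin m) (Fin n) ℝ) (i : Fin m) : ℝ :=
  Real.sqrt ((n : ℝ)⁻¹ * ∑ j, centered X i j ^ 2)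

/-- `P(X) = diag(σ₁(X),…,σ_m(X))⁻¹`. -/
def Pmat {m n : ℕ} (X : Matrix (Fin m) (Fin n) ℝ) : Matrix (Fin m) (Fin m) ℝ :=
  Matrix.diagonal fun i => (rowSigma X i)⁻¹

/-- `LayerNorm(X) = P(X)·M(X)`. -/
def layerNorm {m n : ℕ} (X : Matrix (Fin m) (Fin n) ℝ) : Matrix (Fin m) (Fin n) ℝ :=
  Pmat X * centered X

open Filter Topology

section FrobeniusTopology

/- The product topology and uniformity on matrices agree with those of the Frobenius norm only up
to unfolding, which blocks rewriting with the calculus lemmas for normed spaces; inside this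
section the Frobenius structure is the only one. -/
attribute [-instance] instTopologicalSpaceMatrix Matrix.instUniformSpace

section MatrixCalculus

variable {ι κ F G : Type*} [Fintype ι] [Fintype κ]
  [NormedAddCommGroup F] [NormedSpace ℝ F] [NormedAddCommGroup G] [NormedSpace ℝ G]

def Matrix.frobeniusEquivPi : Matrix ι κ ℝ ≃L[ℝ] (ι → κ → ℝ) :=
  LinearEquiv.toContinuousLinearEquiv (LinearEquiv.refl ℝ _)

def Matrix.entryCLM (i : ι) (j : κ) : Matrix ι κ ℝ →L[ℝ] ℝ :=
  LinearMap.toContinuousLinearMap (entryLinearMap ℝ ℝ i j)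

@[simp] lemma Matrix.entryCLM_apply (i : ι) (j : κ) (A : Matrix ι κ ℝ) : entryCLM i j A = A i j :=
  rfl

lemma contDiffAt_of_entrywise {f : F → Matrix ι κ ℝ} {x : F} {k : WithTop ℕ∞}
    (h : ∀ i j, ContDiffAt ℝ k (fun y => f y i j) x) : ContDiffAt ℝ k f x :=
  (frobeniusEquivPi.comp_contDiffAt_iff).1 <| contDiffAt_pi.2 fun i => contDiffAt_pi.2 (h i)

lemma fderiv_apply_entry {f : F → Matrix ι κ ℝ} {x : F} (hf : DifferentiableAt ℝ f x)
    (v : F) (i : ι) (j : κ) : fderiv ℝ f x v i j = fderiv ℝ (fun y => f y i j) x v := by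
  rw [show (fun y => f y i j) = entryCLM i j ∘ f from rfl,
    ((entryCLM i j).hasFDerivAt.comp x hf.hasFDerivAt).fderiv]
  rfl

lemma fderiv_fderiv_apply_entry {g : F → G →L[ℝ] Matrix ι κ ℝ} {x : F}
    (hg : DifferentiableAt ℝ g x) (u : F) (v : G) (i : ι) (j : κ) :
    fderiv ℝ g x u v i j = fderiv ℝ (fun y => g y v i j) x u := by
  have hgv := (ContinuousLinearMap.apply ℝ (Matrix ι κ ℝ) v).hasFDerivAt.comp x hg.hasFDerivAt
  rw [← fderiv_apply_entry (f := fun y => g y v) hgv.differentiableAt]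
  exact congr_arg (fun L : F →L[ℝ] Matrix ι κ ℝ => L u i j) hgv.fderiv.symm

end MatrixCalculus

section LayerNorm

variable {m n : ℕ}

def rowCov (Y U : Matrix (Fin m) (Fin n) ℝ) (i : Fin m) : ℝ :=
  (n : ℝ)⁻¹ * ∑ j, centered Y i j * centered U i j

lemma rowCov_comm (Y U : Matrix (Fin m) (Fin n) ℝ) (i : Fin m) : rowCov Y U i = rowCov U Y i := by
  simp only [rowCov, mul_comm (centered Y i _)]

lemma rowSigma_eq_sqrt_rowCov (Y : Matrix (Fin m) (Fin n) ℝ) (i : Fin m) :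
    rowSigma Y i = √(rowCov Y Y i) := by
  simp only [rowSigma, rowCov, sq]

lemma layerNorm_apply (Y : Matrix (Fin m) (Fin n) ℝ) (i : Fin m) (j : Fin n) :
    layerNorm Y i j = (rowSigma Y i)⁻¹ * centered Y i j := by
  simp [layerNorm, Pmat, diagonal_mul]

def centeredEntryCLM (i : Fin m) (j : Fin n) : Matrix (Fin m) (Fin n) ℝ →L[ℝ] ℝ :=
  ∑ k, centerC n k j • entryCLM i k

@[simp] lemma centeredEntryCLM_apply (i : Fin m) (j : Fin n) (Y : Matrix (Fin m) (Fin n) ℝ) :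
    centeredEntryCLM i j Y = centered Y i j := by
  simp [centeredEntryCLM, centered, mul_apply, mul_comm]

def rowCovCLM (i : Fin m) : Matrix (Fin m) (Fin n) ℝ →L[ℝ] Matrix (Fin m) (Fin n) ℝ →L[ℝ] ℝ :=
  (n : ℝ)⁻¹ • ∑ j, (centeredEntryCLM i j).smulRight (centeredEntryCLM i j)

@[simp] lemma rowCovCLM_apply (i : Fin m) (Y U : Matrix (Fin m) (Fin n) ℝ) :
    rowCovCLM i Y U = rowCov Y U i := by
  simp [rowCovCLM, rowCov]

lemma hasFDerivAt_rowCov_left (V Y : Matrix (Fin m) (Fin n) ℝ) (i : Fin m) :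
    HasFDerivAt (fun Z => rowCov Z V i) (rowCovCLM i V) Y := by
  convert (rowCovCLM i V).hasFDerivAt (x := Y) using 1
  ext Z
  simp [rowCov_comm V]

lemma hasFDerivAt_rowCov_self (Y : Matrix (Fin m) (Fin n) ℝ) (i : Fin m) :
    HasFDerivAt (fun Z => rowCov Z Z i) ((2 : ℝ) • rowCovCLM i Y) Y := by
  simp_rw [← rowCovCLM_apply]
  refine ((rowCovCLM i).hasFDerivAt.clm_apply (hasFDerivAt_id Y)).congr_fderiv ?_
  ext U
  simp [rowCov_comm U Y]
  ring

lemma hasFDerivAt_rowSigma_inv {Y : Matrix (Fin m) (Fin n) ℝ} {i : Fin m}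
    (h : 0 < rowSigma Y i) :
    HasFDerivAt (fun Z => (rowSigma Z i)⁻¹) (-(rowSigma Y i)⁻¹ ^ 3 • rowCovCLM i Y) Y := by
  have hq : 0 < rowCov Y Y i := by
    rwa [rowSigma_eq_sqrt_rowCov, Real.sqrt_pos] at h
  have hσ := (Real.hasDerivAt_sqrt hq.ne').comp_hasFDerivAt Y (hasFDerivAt_rowCov_self Y i)
  have hσinv := (hasDerivAt_inv (Real.sqrt_pos.2 hq).ne').comp_hasFDerivAt Y hσ
  simp only [Function.comp_def, ← rowSigma_eq_sqrt_rowCov] at hσinv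
  refine hσinv.congr_fderiv ?_
  ext U
  simp
  field_simp

lemma contDiffAt_rowSigma_inv {Y : Matrix (Fin m) (Fin n) ℝ} {i : Fin m} {k : WithTop ℕ∞}
    (h : 0 < rowSigma Y i) : ContDiffAt ℝ k (fun Z => (rowSigma Z i)⁻¹) Y := by
  have hq : 0 < rowCov Y Y i := by
    rwa [rowSigma_eq_sqrt_rowCov, Real.sqrt_pos] at h
  have hcov : ContDiffAt ℝ k (fun Z => rowCov Z Z i) Y := by
    simp_rw [← rowCovCLM_apply]
    exact ((rowCovCLM i).contDiff.clm_apply contDiff_id).contDiffAt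
  simp only [rowSigma_eq_sqrt_rowCov]
  exact ((Real.contDiffAt_sqrt hq.ne').comp Y hcov).inv (Real.sqrt_pos.2 hq).ne'

lemma contDiffAt_layerNorm {Y : Matrix (Fin m) (Fin n) ℝ} (hY : ∀ i, 0 < rowSigma Y i)
    {k : WithTop ℕ∞} : ContDiffAt ℝ k layerNorm Y := by
  refine contDiffAt_of_entrywise fun i j => ?_
  simp only [layerNorm_apply, ← centeredEntryCLM_apply]
  exact (contDiffAt_rowSigma_inv (hY i)).mul (centeredEntryCLM i j).contDiff.contDiffAt

lemma continuous_rowSigma (i : Fin m) :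
    Continuous fun Z : Matrix (Fin m) (Fin n) ℝ => rowSigma Z i := by
  simp_rw [rowSigma_eq_sqrt_rowCov, ← rowCovCLM_apply]
  exact Real.continuous_sqrt.comp ((rowCovCLM i).continuous.clm_apply continuous_id)

lemma eventually_rowSigma_pos {X : Matrix (Fin m) (Fin n) ℝ} (hX : ∀ i, 0 < rowSigma X i) :
    ∀ᶠ Y in 𝓝 X, ∀ i, 0 < rowSigma Y i :=
  Filter.eventually_all.2 fun i => continuousAt_const.eventually_lt
    (continuous_rowSigma i).continuousAt (hX i)

lemma fderiv_layerNorm_apply {Y : Matrix (Fin m) (Fin n) ℝ} (hY : ∀ i, 0 < rowSigma Y i)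
    (V : Matrix (Fin m) (Fin n) ℝ) :
    fderiv ℝ layerNorm Y V = Pmat Y * centered V
      - diagonal (fun i => (rowSigma Y i)⁻¹ ^ 3 * rowCov Y V i) * centered Y := by
  ext i j
  rw [fderiv_apply_entry ((contDiffAt_layerNorm hY).differentiableAt one_ne_zero)]
  simp only [layerNorm_apply, ← centeredEntryCLM_apply]
  rw [((hasFDerivAt_rowSigma_inv (hY i)).fun_mul (centeredEntryCLM i j).hasFDerivAt).fderiv]
  simp [Pmat, diagonal_mul]
  ring

def layerNormHessian (X U V : Matrix (Fin m) (Fin n) ℝ) : Matrix (Fin m) (Fin n) ℝ :=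
  diagonal (fun i => (rowSigma X i)⁻¹ ^ 5 * (3 * rowCov X U i * rowCov X V i)) * centered X
    - diagonal (fun i => (rowSigma X i)⁻¹ ^ 3 * rowCov U V i) * centered X
    - diagonal (fun i => (rowSigma X i)⁻¹ ^ 3 * rowCov X U i) * centered V
    - diagonal (fun i => (rowSigma X i)⁻¹ ^ 3 * rowCov X V i) * centered U

lemma differentiableAt_fderiv_layerNorm {X : Matrix (Fin m) (Fin n) ℝ}
    (hX : ∀ i, 0 < rowSigma X i) : DifferentiableAt ℝ (fderiv ℝ layerNorm) X :=
  ((contDiffAt_layerNorm hX (k := 2)).fderiv_right (m := 1) (by norm_num)).differentiableAt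
    one_ne_zero

lemma fderiv_fderiv_layerNorm_apply {X : Matrix (Fin m) (Fin n) ℝ} (hX : ∀ i, 0 < rowSigma X i)
    (U V : Matrix (Fin m) (Fin n) ℝ) :
    fderiv ℝ (fderiv ℝ layerNorm) X U V = layerNormHessian X U V := by
  ext i j
  have hD : (fun Y => fderiv ℝ layerNorm Y V i j) =ᶠ[𝓝 X] fun Y =>
      (rowSigma Y i)⁻¹ * centered V i j
        - (rowSigma Y i)⁻¹ ^ 3 * rowCov Y V i * centeredEntryCLM i j Y := by
    filter_upwards [eventually_rowSigma_pos hX] with Y hY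
    simp [fderiv_layerNorm_apply hY, Pmat, diagonal_mul]
  have hinv := hasFDerivAt_rowSigma_inv (hX i)
  rw [fderiv_fderiv_apply_entry (differentiableAt_fderiv_layerNorm hX), hD.fderiv_eq,
    ((hinv.mul_const _).fun_sub (((hinv.pow 3).fun_mul (hasFDerivAt_rowCov_left V X i)).fun_mul
      (centeredEntryCLM i j).hasFDerivAt)).fderiv]
  simp [layerNormHessian, diagonal_mul, rowCov_comm V U]
  ring

end LayerNorm
end FrobeniusTopology

section Bounds

variable {m n : ℕ}

lemma centered_apply (U : Matrix (Fin m) (Fin n) ℝ) (i : Fin m) (j : Fin n) :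
    centered U i j = U i j - (n : ℝ)⁻¹ * ∑ k, U i k := by
  simp [centered, centerC, mul_apply, Matrix.sub_apply, one_apply, mul_sub, Finset.sum_sub_distrib,
    ← Finset.sum_mul, mul_comm]

lemma frob_nonneg (A : Matrix (Fin m) (Fin n) ℝ) : 0 ≤ frob A :=
  Real.sqrt_nonneg _

lemma spec_nonneg (A : Matrix (Fin m) (Fin n) ℝ) : 0 ≤ spec A :=
  norm_nonneg _

lemma frob_eq_norm (A : Matrix (Fin m) (Fin n) ℝ) : frob A = ‖A‖ := by
  simp [frob, frobenius_norm_def, Real.sqrt_eq_rpow]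

def rowNorm (A : Matrix (Fin m) (Fin n) ℝ) (i : Fin m) : ℝ :=
  √(∑ j, A i j ^ 2)

lemma rowNorm_nonneg (A : Matrix (Fin m) (Fin n) ℝ) (i : Fin m) : 0 ≤ rowNorm A i :=
  Real.sqrt_nonneg _

lemma sq_rowNorm (A : Matrix (Fin m) (Fin n) ℝ) (i : Fin m) :
    rowNorm A i ^ 2 = ∑ j, A i j ^ 2 :=
  Real.sq_sqrt (by positivity)

lemma sq_frob (A : Matrix (Fin m) (Fin n) ℝ) : frob A ^ 2 = ∑ i, rowNorm A i ^ 2 := by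
  simp only [frob, sq_rowNorm]
  exact Real.sq_sqrt (by positivity)

lemma rowNorm_le_frob (A : Matrix (Fin m) (Fin n) ℝ) (i : Fin m) : rowNorm A i ≤ frob A :=
  Real.sqrt_le_sqrt <| Finset.single_le_sum (f := fun i => ∑ j, A i j ^ 2)
    (fun _ _ => by positivity) (Finset.mem_univ i)

lemma rowNorm_centered_le (A : Matrix (Fin m) (Fin n) ℝ) (i : Fin m) :
    rowNorm (centered A) i ≤ rowNorm A i := by
  refine Real.sqrt_le_sqrt ?_
  rcases Nat.eq_zero_or_pos n with rfl | hn
  · simp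
  simp only [centered_apply]
  set μ := (n : ℝ)⁻¹ * ∑ k, A i k
  have hsum : ∑ k, A i k = n * μ := by
    rw [← mul_assoc, mul_inv_cancel₀ (by positivity), one_mul]
  have hvar : ∑ j, (A i j - μ) ^ 2 = ∑ j, A i j ^ 2 - n * μ ^ 2 := by
    simp only [sub_sq, Finset.sum_add_distrib, Finset.sum_sub_distrib, ← Finset.sum_mul,
      ← Finset.mul_sum, hsum, Finset.sum_const, Finset.card_univ, Fintype.card_fin, nsmul_eq_mul]
    ring
  rw [hvar]
  nlinarith [sq_nonneg μ, (Nat.cast_nonneg n : (0 : ℝ) ≤ n)]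

lemma rowNorm_le_spec (A : Matrix (Fin m) (Fin n) ℝ) (i : Fin m) : rowNorm A i ≤ spec A := by
  set u : EuclideanSpace ℝ (Fin n) := WithLp.toLp 2 (A i)
  have hu : ‖u‖ = rowNorm A i := by simp [u, EuclideanSpace.norm_eq, rowNorm]
  have h : rowNorm A i ^ 2 ≤ spec A * rowNorm A i :=
    calc rowNorm A i ^ 2 = (toEuclideanLin A u) i := by
          rw [sq_rowNorm]
          simp [u, mulVec, dotProduct, sq]
      _ ≤ ‖toEuclideanLin A u‖ := by
          simpa using (le_abs_self _).trans (PiLp.norm_apply_le (toEuclideanLin A u) i)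
      _ ≤ spec A * ‖u‖ := (LinearMap.toContinuousLinearMap (toEuclideanLin A)).le_opNorm u
      _ = spec A * rowNorm A i := by rw [hu]
  nlinarith [rowNorm_nonneg A i, spec_nonneg A]

lemma abs_rowCov_le (Y U : Matrix (Fin m) (Fin n) ℝ) (i : Fin m) :
    |rowCov Y U i| ≤ (n : ℝ)⁻¹ * rowNorm Y i * rowNorm U i := by
  have hcs := Real.abs_le_sqrt (Finset.sum_mul_sq_le_sq_mul_sq Finset.univ
    (fun j => centered Y i j) (fun j => centered U i j))
  rw [Real.sqrt_mul (by positivity)] at hcs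
  rw [rowCov, abs_mul, abs_of_nonneg (by positivity), mul_assoc]
  gcongr
  exact hcs.trans (mul_le_mul (rowNorm_centered_le Y i) (rowNorm_centered_le U i)
    (rowNorm_nonneg _ _) (rowNorm_nonneg _ _))

lemma rowNorm_diagonal_mul (r : Fin m → ℝ) (A : Matrix (Fin m) (Fin n) ℝ) (i : Fin m) :
    rowNorm (diagonal r * A) i = |r i| * rowNorm A i := by
  simp only [rowNorm, diagonal_mul, mul_pow, ← Finset.mul_sum]
  rw [Real.sqrt_mul (sq_nonneg _), Real.sqrt_sq_eq_abs]

lemma frob_diagonal_mul_le {r : Fin m → ℝ} {A B : Matrix (Fin m) (Fin n) ℝ} {c K : ℝ}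
    (hc : 0 ≤ c) (hK : 0 ≤ K) (hr : ∀ i, |r i| ≤ c * rowNorm B i) (hA : ∀ i, rowNorm A i ≤ K) :
    frob (diagonal r * A) ≤ c * K * frob B := by
  refine le_of_pow_le_pow_left₀ two_ne_zero (mul_nonneg (mul_nonneg hc hK) (frob_nonneg B)) ?_
  rw [sq_frob, mul_pow, sq_frob, Finset.mul_sum]
  gcongr with i
  rw [rowNorm_diagonal_mul]
  calc (|r i| * rowNorm A i) ^ 2 ≤ (c * rowNorm B i * K) ^ 2 :=
        pow_le_pow_left₀ (by positivity [rowNorm_nonneg A i])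
          (mul_le_mul (hr i) (hA i) (rowNorm_nonneg A i) (by positivity [rowNorm_nonneg B i])) 2
    _ = _ := by ring

lemma two_le_of_rowSigma_pos {X : Matrix (Fin m) (Fin n) ℝ} {i : Fin m}
    (h : 0 < rowSigma X i) : 2 ≤ n := by
  by_contra! hn
  interval_cases n
  · simp [rowSigma] at h
  · have hM : ∀ j, centered X i j = 0 := fun j => by
      simp [centered_apply, Subsingleton.elim j 0]
    simp [rowSigma, hM] at h

lemma abs_rowCov_le_spec (X W : Matrix (Fin m) (Fin n) ℝ) (i : Fin m) :
    |rowCov X W i| ≤ (n : ℝ)⁻¹ * spec X * rowNorm W i :=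
  (abs_rowCov_le X W i).trans <| by
    gcongr
    exacts [rowNorm_nonneg W i, rowNorm_le_spec X i]

lemma abs_inv_pow_mul_le {s σ a b : ℝ} (hσ : 0 < σ) (hs : σ ≤ s) (ha : |a| ≤ b) (k : ℕ) :
    |s⁻¹ ^ k * a| ≤ σ⁻¹ ^ k * b := by
  have hs0 := hσ.trans_le hs
  rw [abs_mul, abs_pow, abs_inv, abs_of_pos hs0]
  exact mul_le_mul (pow_le_pow_left₀ (by positivity) (inv_anti₀ hσ hs) k) ha (abs_nonneg a)
    (by positivity)

lemma frob_layerNormHessian_le {X : Matrix (Fin m) (Fin n) ℝ} {σ : ℝ} (hσ : 0 < σ)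
    (hσX : ∀ i, σ ≤ rowSigma X i) (U V : Matrix (Fin m) (Fin n) ℝ) :
    frob (layerNormHessian X U V) ≤
      (3 * spec X ^ 3 / (n ^ 2 * σ ^ 5) + 3 * (spec X / (n * σ ^ 3))) * frob U * frob V := by
  set S := spec X
  have hS : 0 ≤ S := spec_nonneg X
  have hV : 0 ≤ frob V := frob_nonneg V
  have hcovX := abs_rowCov_le_spec X
  have hcovXV : ∀ i, |rowCov X V i| ≤ (n : ℝ)⁻¹ * S * frob V := fun i =>
    (hcovX V i).trans (by gcongr; exact rowNorm_le_frob V i)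
  have hcovUV : ∀ i, |rowCov U V i| ≤ (n : ℝ)⁻¹ * frob V * rowNorm U i := fun i =>
    (abs_rowCov_le U V i).trans <| by
      rw [mul_right_comm]
      gcongr
      exacts [rowNorm_nonneg U i, rowNorm_le_frob V i]
  have hcenX : ∀ i, rowNorm (centered X) i ≤ S := fun i =>
    (rowNorm_centered_le X i).trans (rowNorm_le_spec X i)
  have hcen : ∀ (W : Matrix (Fin m) (Fin n) ℝ) i, rowNorm (centered W) i ≤ frob W := fun W i =>
    (rowNorm_centered_le W i).trans (rowNorm_le_frob W i)
  have hXUXV : frob (diagonal (fun i => (rowSigma X i)⁻¹ ^ 5 * (3 * rowCov X U i * rowCov X V i))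
      * centered X) ≤ σ⁻¹ ^ 5 * 3 * ((n : ℝ)⁻¹ * S) * ((n : ℝ)⁻¹ * S * frob V) * S * frob U := by
    refine frob_diagonal_mul_le (by positivity) hS (fun i => ?_) hcenX
    have h3 : |3 * rowCov X U i * rowCov X V i|
        ≤ 3 * ((n : ℝ)⁻¹ * S * rowNorm U i) * ((n : ℝ)⁻¹ * S * frob V) := by
      rw [abs_mul, abs_mul, abs_of_pos three_pos]
      exact mul_le_mul (mul_le_mul_of_nonneg_left (hcovX U i) zero_le_three) (hcovXV i)
        (abs_nonneg _) (by positivity [rowNorm_nonneg U i])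
    exact (abs_inv_pow_mul_le hσ (hσX i) h3 5).trans_eq (by ring)
  have hUV : frob (diagonal (fun i => (rowSigma X i)⁻¹ ^ 3 * rowCov U V i) * centered X)
      ≤ σ⁻¹ ^ 3 * ((n : ℝ)⁻¹ * frob V) * S * frob U :=
    frob_diagonal_mul_le (by positivity) hS
      (fun i => (abs_inv_pow_mul_le hσ (hσX i) (hcovUV i) 3).trans_eq (by ring)) hcenX
  have hX : ∀ W W' : Matrix (Fin m) (Fin n) ℝ,
      frob (diagonal (fun i => (rowSigma X i)⁻¹ ^ 3 * rowCov X W i) * centered W')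
        ≤ σ⁻¹ ^ 3 * ((n : ℝ)⁻¹ * S) * frob W' * frob W := fun W W' =>
    frob_diagonal_mul_le (by positivity) (frob_nonneg W')
      (fun i => (abs_inv_pow_mul_le hσ (hσX i) (hcovX W i) 3).trans_eq (by ring)) (hcen W')
  calc frob (layerNormHessian X U V)
      ≤ σ⁻¹ ^ 5 * 3 * ((n : ℝ)⁻¹ * S) * ((n : ℝ)⁻¹ * S * frob V) * S * frob U
        + σ⁻¹ ^ 3 * ((n : ℝ)⁻¹ * frob V) * S * frob U
        + σ⁻¹ ^ 3 * ((n : ℝ)⁻¹ * S) * frob V * frob U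
        + σ⁻¹ ^ 3 * ((n : ℝ)⁻¹ * S) * frob U * frob V := by
        simp only [frob_eq_norm, layerNormHessian] at *
        exact (norm_sub_le _ _).trans (add_le_add ((norm_sub_le _ _).trans (add_le_add
          ((norm_sub_le _ _).trans (add_le_add hXUXV hUV)) (hX U V))) (hX V U))
    _ = _ := by
        field_simp
        ring

end Bounds

lemma layerNorm_hessian_coeff_le {m n S σ : ℝ} (hm : 1 ≤ m) (hn : 2 ≤ n) (hS : 0 ≤ S)
    (hσ : 0 < σ) :
    3 * S ^ 3 / (n ^ 2 * σ ^ 5) + 3 * (S / (n * σ ^ 3)) ≤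
      S / σ ^ 3 * (1 + √(m / n)) + S ^ 2 / (√n * σ ^ 3) + 3 * S ^ 3 / (n * σ ^ 5) := by
  have hn0 : 0 < n := by linarith
  have hcubic : 3 * S ^ 3 / (n ^ 2 * σ ^ 5) ≤ 3 * S ^ 3 / (n * σ ^ 5) :=
    div_le_div_of_nonneg_left (by positivity) (by positivity) (by gcongr; nlinarith)
  have hinv_le_sqrt : 1 / n ≤ √(m / n) := by
    rw [Real.le_sqrt (by positivity) (by positivity), div_pow, one_pow,
      div_le_div_iff₀ (by positivity) hn0]
    nlinarith
  have hsplit : S / (n * σ ^ 3) = S / σ ^ 3 * (1 / n) := by field_simp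
  have hhalf : S / σ ^ 3 * (1 / n) ≤ S / σ ^ 3 * (1 / 2) := by
    gcongr
  have hsqrt : S / σ ^ 3 * (1 / n) ≤ S / σ ^ 3 * √(m / n) := by
    gcongr
  have hmid : 0 ≤ S ^ 2 / (√n * σ ^ 3) := by positivity
  rw [hsplit, mul_one_add]
  linarith

/-- LayerNorm Hessian norm bound.  With `σ_min = min_i σᵢ(X) > 0`, the
second Fréchet derivative of LayerNorm at `X` satisfies
`‖D²LayerNorm(X)[U,V]‖_F ≤ [(‖X‖₂/σ_min³)·(1 + sqrt(m/n)) + ‖X‖₂²/(√n·σ_min³)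
  + 3·‖X‖₂³/(n·σ_min⁵)]·‖U‖_F·‖V‖_F`. -/
theorem layerNorm_hessian_norm_bound {m n : ℕ} (hm : 0 < m)
    (X : Matrix (Fin m) (Fin n) ℝ) (hσ : ∀ i, 0 < rowSigma X i) :
    DifferentiableAt ℝ (fun Y : Matrix (Fin m) (Fin n) ℝ => layerNorm Y) X ∧
    DifferentiableAt ℝ (fderiv ℝ (fun Y : Matrix (Fin m) (Fin n) ℝ => layerNorm Y)) X ∧
    ∀ U V : Matrix (Fin m) (Fin n) ℝ,
      frob (fderiv ℝ (fderiv ℝ (fun Y : Matrix (Fin m) (Fin n) ℝ => layerNorm Y)) X U V) ≤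
        (spec X / (⨅ i, rowSigma X i) ^ 3 * (1 + Real.sqrt ((m : ℝ) / n)) +
          spec X ^ 2 / (Real.sqrt n * (⨅ i, rowSigma X i) ^ 3) +
          3 * spec X ^ 3 / ((n : ℝ) * (⨅ i, rowSigma X i) ^ 5)) * frob U * frob V := by
  have : Nonempty (Fin m) := ⟨⟨0, hm⟩⟩
  have hσmin : ∀ i, ⨅ i, rowSigma X i ≤ rowSigma X i := ciInf_le (Finite.bddBelow_range _)
  have hσmin_pos : 0 < ⨅ i, rowSigma X i := by
    obtain ⟨i, hi⟩ := exists_eq_ciInf_of_finite (f := rowSigma X)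
    exact hi ▸ hσ i
  refine ⟨(contDiffAt_layerNorm hσ (k := 1)).differentiableAt one_ne_zero,
    differentiableAt_fderiv_layerNorm hσ, fun U V => ?_⟩
  calc frob (fderiv ℝ (fderiv ℝ (fun Y : Matrix (Fin m) (Fin n) ℝ => layerNorm Y)) X U V)
      = frob (layerNormHessian X U V) := congrArg frob (fderiv_fderiv_layerNorm_apply hσ U V)
    _ ≤ _ := frob_layerNormHessian_le hσmin_pos hσmin U V
    _ ≤ _ := by
      gcongr ?_ * _ * _
      · exact frob_nonneg V
      · exact frob_nonneg U
      exact layerNorm_hessian_coeff_le (Nat.one_le_cast.2 hm)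
        (Nat.ofNat_le_cast.2 (two_le_of_rowSigma_pos (hσ ⟨0, hm⟩))) (spec_nonneg X) hσmin_pos
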